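/- Let G be a hyperbolic random graph on n vertices with parameters α ∈ (1/2,1) and C ∈ ℝ, and fix τ > 0. Then for every constant c > 0 there exists a constant K such that with probability 1 − O(n^{−c}), every set of at most 2w + 1 circularly consecutive sectors of the sector decomposition contains at most K·log(n) of the n sampled points, where w = e^{γ(n,τ)}·log^{(3)}(n). -/

import Mathlib

open MeasureTheory ProbabilityTheory Filter Real Asymptotics

/-- Twice iterated natural logarithm. -/
noncomputable def loglog (n : ℕ) : ℝ := Real.log (Real.log n)

/-- Thrice iterated natural logarithm. -/
noncomputable def logloglog (n : ℕ) : ℝ := Real.log (Real.log (Real.log n))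

/-- `γ(n, τ) = log(τ·log^{(2)}(n) / (2·(log^{(3)}(n))²))`. -/
noncomputable def gam (n : ℕ) (τ : ℝ) : ℝ :=
  Real.log (τ * loglog n / (2 * (logloglog n) ^ 2))

/-- The radius `R = 2·log n + C` of the hyperbolic disk. -/
noncomputable def bigR (C : ℝ) (n : ℕ) : ℝ := 2 * Real.log n + C

/-- The threshold radius `ρ(n) = R − log((π/2)·e^{C/2}·γ(n,τ))`. -/
noncomputable def rho (C τ : ℝ) (n : ℕ) : ℝ :=
  bigR C n - Real.log (Real.pi / 2 * Real.exp (C / 2) * gam n τ)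

/-- `θ_n`, the maximal angular distance at which two points of radius `ρ(n)` are
adjacent in the hyperbolic disk of radius `R`. -/
noncomputable def theta (C τ : ℝ) (n : ℕ) : ℝ :=
  Real.arccos ((Real.cosh (rho C τ n) ^ 2 - Real.cosh (bigR C n)) /
    Real.sinh (rho C τ n) ^ 2)

/-- The number of sectors of angular width `θ_n` in the disk. -/
noncomputable def nSec (C τ : ℝ) (n : ℕ) : ℕ := ⌊2 * Real.pi / theta C τ n⌋₊

/-- The threshold `w = e^{γ(n,τ)}·log^{(3)}(n)` distinguishing narrow and wide runs. -/
noncomputable def wThr (n : ℕ) (τ : ℝ) : ℝ := Real.exp (gam n τ) * logloglog n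

/-- The index of the sector (among `n'` equal sectors of the disk) containing the
angle `φ`. -/
noncomputable def sectorIdx (n' : ℕ) (φ : ℝ) : ZMod n' :=
  ((⌊φ * n' / (2 * Real.pi)⌋ : ℤ) : ZMod n')

/-- `occupancy n' angles k` is `true` iff sector `k` contains the angular coordinate of
at least one of the points. -/
noncomputable def occupancy {n : ℕ} (n' : ℕ) (angles : Fin n → ℝ) (k : ZMod n') : Bool :=
  @decide (∃ i, sectorIdx n' (angles i) = k) (Classical.propDecidable _)

/-- The length of the maximal circular run of `true`s of `s` containing the index `i`;
`0` if `s i = false`. -/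
noncomputable def runLen {n' : ℕ} (s : ZMod n' → Bool) (i : ZMod n') : ℕ :=
  sSup {k : ℕ | k ≤ n' ∧ ∃ j : ZMod n',
    (∀ m : ℕ, m < k → s (j + (m : ZMod n')) = true) ∧
    ∃ t : ℕ, t < k ∧ i = j + (t : ZMod n')}

/-- The number of indices lying in a success run of length greater than `w`. -/
noncomputable def runSumGT {n' : ℕ} (w : ℝ) (s : ZMod n' → Bool) : ℕ :=
  Nat.card {i : ZMod n' | w < (runLen s i : ℝ)}

/-- The probability density of a point (angle, radius) of a hyperbolic random graph
with parameters `α` and disk radius `R`. -/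
noncomputable def hrgPDF (α R : ℝ) (p : ℝ × ℝ) : ℝ :=
  if 0 ≤ p.1 ∧ p.1 < 2 * Real.pi ∧ 0 ≤ p.2 ∧ p.2 ≤ R then
    (1 / (2 * Real.pi)) * (α * Real.sinh (α * p.2) / (Real.cosh (α * R) - 1))
  else 0

/-- The distribution of a single point (angle, radius) of a hyperbolic random graph. -/
noncomputable def hrgMeasure (α R : ℝ) : Measure (ℝ × ℝ) :=
  volume.withDensity fun p => ENNReal.ofReal (hrgPDF α R p)

/-- `pts` is a sample of a hyperbolic random graph on `n` vertices with parameters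
`α` and `C`: the points (angle, radius) are independent, each with the hyperbolic
density on the disk of radius `R = 2 log n + C`. -/
structure IsHRG (α C : ℝ) (n : ℕ) {Ω : Type*} [MeasurableSpace Ω] (μ : Measure Ω)
    (pts : Fin n → Ω → ℝ × ℝ) : Prop where
  meas : ∀ i, Measurable (pts i)
  indep : iIndepFun pts μ
  law : ∀ i, Measure.map (pts i) μ = hrgMeasure α (bigR C n)

/-- The number of sampled points whose angular coordinate lies in the angular interval
formed by the `ℓ` consecutive sectors `j, j+1, …, j+ℓ−1`. -/
noncomputable def ptsInWindow {n : ℕ} (n' : ℕ) (angles : Fin n → ℝ)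
    (j : ZMod n') (ℓ : ℕ) : ℕ :=
  Nat.card {i : Fin n | ∃ t : ℕ, t < ℓ ∧ sectorIdx n' (angles i) = j + (t : ZMod n')}

open scoped ENNReal

/-! The angular coordinate of every point is uniform on `[0, 2π)`, so a window of `L` of the
`n'` sectors receives each point independently with probability `L / n'`. A union bound over the
`n'` windows and the `k`-sets of points bounds the probability that some window receives `k`
points by `n' · C(n, k) (L / n')^k ≤ n' (n L / n')^k / k!`, which is at most `n' e^{-k}` once
`e² n L / n' ≤ k`. Since `θ_n ≍ γ / n`, there are `n' ≍ n / γ` sectors and, for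
`L ≤ 2w + 1`, the mean `n L / n'` is `O((log log n)²) = o(log n)`; with `k = ⌈(c + 2) log n⌉`
and `n' ≤ n²` the probability is at most `n² e^{-k} ≤ n^{-c}`. -/

lemma Nat.choose_mul_pow_le_exp_neg {n k : ℕ} {p : ℝ} (hp : 0 ≤ p)
    (h : exp 2 * (n * p) ≤ k) :
    (n.choose k : ℝ) * p ^ k ≤ exp (-k) := by
  have hnp : (n : ℝ) * p ≤ k * exp (-2) := by
    rw [exp_neg, ← div_eq_mul_inv, le_div_iff₀ (exp_pos 2)]; linarith
  calc (n.choose k : ℝ) * p ^ k ≤ (n : ℝ) ^ k / k.factorial * p ^ k := by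
        gcongr; exact Nat.choose_le_pow_div k n
    _ = (n * p) ^ k / k.factorial := by ring
    _ ≤ (k * exp (-2)) ^ k / k.factorial := by gcongr
    _ = exp (-2) ^ k * ((k : ℝ) ^ k / k.factorial) := by ring
    _ ≤ exp (-2) ^ k * exp k := by gcongr; exact pow_div_factorial_le_exp _ k.cast_nonneg k
    _ = exp (-k) := by rw [← exp_nat_mul, ← exp_add]; ring_nf

lemma sq_mul_exp_neg_le_rpow_neg {x c y : ℝ} (hx : 0 < x) (hy : (c + 2) * log x ≤ y) :
    x ^ 2 * exp (-y) ≤ x ^ (-c) := by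
  calc x ^ 2 * exp (-y) ≤ x ^ (2 : ℝ) * x ^ (-(c + 2)) := by
        rw [rpow_two, rpow_def_of_pos hx (-(c + 2))]
        gcongr; linarith
    _ = x ^ (-c) := by rw [← rpow_add hx]; ring_nf

lemma sqrt_le_arccos_one_sub {t : ℝ} (ht : 0 ≤ t) (ht2 : t ≤ 2) :
    √t ≤ arccos (1 - t) := by
  have hcos : cos (arccos (1 - t)) = 1 - t := cos_arccos (by linarith) (by linarith)
  have := one_sub_sq_div_two_le_cos (x := arccos (1 - t))
  rw [← sqrt_sq (arccos_nonneg (1 - t))]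
  exact sqrt_le_sqrt (by linarith)

lemma arccos_one_sub_le_pi_mul_sqrt {t : ℝ} (ht : 0 ≤ t) (ht2 : t ≤ 2) :
    arccos (1 - t) ≤ π * √t := by
  set θ := arccos (1 - t)
  have hcos : cos θ = 1 - t := cos_arccos (by linarith) (by linarith)
  have hθ : 0 ≤ θ := arccos_nonneg _
  have hub : cos θ ≤ 1 - 2 / π ^ 2 * θ ^ 2 :=
    cos_le_one_sub_mul_cos_sq (by rw [abs_of_nonneg hθ]; exact arccos_le_pi _)
  have hθt : θ ^ 2 ≤ (π * √t) ^ 2 := by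
    rw [mul_pow, sq_sqrt ht]
    have : 2 / π ^ 2 * θ ^ 2 ≤ t := by linarith
    rw [div_mul_eq_mul_div, div_le_iff₀ (by positivity)] at this
    nlinarith [sq_nonneg θ]
  exact (pow_le_pow_iff_left₀ hθ (by positivity) two_ne_zero).1 hθt

lemma exp_div_four_le_sinh {x : ℝ} (hx : 1 ≤ x) : exp x / 4 ≤ sinh x := by
  have h1 : exp (-x) ≤ 1 := exp_le_one_iff.2 (by linarith)
  have h2 : 2 ≤ exp x := by linarith [add_one_le_exp x]
  rw [sinh_eq]; linarith

lemma exp_div_four_le_cosh_sub_one {x : ℝ} (hx : 2 ≤ x) : exp x / 4 ≤ cosh x - 1 := by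
  have h4 : 4 ≤ exp x := by nlinarith [quadratic_le_exp_of_nonneg (by linarith : 0 ≤ x)]
  rw [cosh_eq]; linarith [exp_pos (-x)]

lemma cosh_sub_one_le_exp {x : ℝ} (hx : 0 ≤ x) : cosh x - 1 ≤ exp x := by
  have : exp (-x) ≤ 1 := exp_le_one_iff.2 (by linarith)
  rw [cosh_eq]; linarith [exp_pos x]

/-- By the hyperbolic law of cosines, the angle at which two points of radius `ρ` are at
distance `R`. -/
lemma arccos_hyperbolic_mem_Icc {R ρ : ℝ} (hR : 2 ≤ R) (hρ : 1 ≤ ρ)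
    (h : 4 * exp ((R - 2 * ρ) / 2) ≤ 1) :
    exp ((R - 2 * ρ) / 2) ≤ arccos ((cosh ρ ^ 2 - cosh R) / sinh ρ ^ 2) ∧
      arccos ((cosh ρ ^ 2 - cosh R) / sinh ρ ^ 2) ≤ 4 * π * exp ((R - 2 * ρ) / 2) := by
  set q := exp ((R - 2 * ρ) / 2)
  have hq : 0 < q := exp_pos _
  have hq2 : q ^ 2 = exp R / exp ρ ^ 2 := by
    rw [← exp_nat_mul, ← exp_nat_mul, ← exp_sub]; ring_nf
  have hsinh_lb := exp_div_four_le_sinh hρ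
  have hsinh_ub : sinh ρ ≤ exp ρ / 2 := by rw [sinh_eq]; linarith [exp_pos (-ρ)]
  have hcosh_lb := exp_div_four_le_cosh_sub_one hR
  have hcosh_ub := cosh_sub_one_le_exp (by linarith : 0 ≤ R)
  have hsinh_pos : 0 < sinh ρ := by linarith [exp_pos ρ]
  have ht_lb : q ^ 2 ≤ (cosh R - 1) / sinh ρ ^ 2 := by
    rw [hq2, show exp R / exp ρ ^ 2 = (exp R / 4) / (exp ρ / 2) ^ 2 by ring]
    gcongr
    linarith [exp_pos R]
  have ht_ub : (cosh R - 1) / sinh ρ ^ 2 ≤ (4 * q) ^ 2 := by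
    rw [mul_pow, hq2, show 4 ^ 2 * (exp R / exp ρ ^ 2) = exp R / (exp ρ / 4) ^ 2 by ring]
    gcongr
  have harg : (cosh ρ ^ 2 - cosh R) / sinh ρ ^ 2 = 1 - (cosh R - 1) / sinh ρ ^ 2 := by
    rw [cosh_sq']; field_simp; ring
  set t := (cosh R - 1) / sinh ρ ^ 2
  have ht0 : 0 ≤ t := by linarith [sq_nonneg q]
  have ht2 : t ≤ 2 := by nlinarith
  rw [harg]
  constructor
  · calc q = √(q ^ 2) := (sqrt_sq hq.le).symm
      _ ≤ √t := sqrt_le_sqrt ht_lb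
      _ ≤ arccos (1 - t) := sqrt_le_arccos_one_sub ht0 ht2
  · calc arccos (1 - t) ≤ π * √t := arccos_one_sub_le_pi_mul_sqrt ht0 ht2
      _ ≤ π * √((4 * q) ^ 2) := by gcongr
      _ = 4 * π * q := by rw [sqrt_sq (by positivity)]; ring

lemma tendsto_log_natCast_atTop : Tendsto (fun n : ℕ => log n) atTop atTop :=
  tendsto_log_atTop.comp tendsto_natCast_atTop_atTop

lemma tendsto_loglog_atTop : Tendsto loglog atTop atTop :=
  tendsto_log_atTop.comp tendsto_log_natCast_atTop

lemma tendsto_bigR_atTop (C : ℝ) : Tendsto (bigR C) atTop atTop :=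
  tendsto_atTop_add_const_right _ C (tendsto_log_natCast_atTop.const_mul_atTop two_pos)

lemma isLittleO_logloglog_sq_loglog : (fun n : ℕ => logloglog n ^ 2) =o[atTop] loglog :=
  isLittleO_pow_log_id_atTop.comp_tendsto tendsto_loglog_atTop

lemma isLittleO_loglog_sq_log : (fun n : ℕ => loglog n ^ 2) =o[atTop] fun n => log n :=
  isLittleO_pow_log_id_atTop.comp_tendsto tendsto_log_natCast_atTop

lemma isLittleO_loglog_natCast : loglog =o[atTop] fun n : ℕ => (n : ℝ) :=
  (isLittleO_log_id_atTop.comp_tendsto tendsto_log_natCast_atTop).trans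
    (isLittleO_log_id_atTop.comp_tendsto tendsto_natCast_atTop_atTop)

section IteratedLog

variable {τ : ℝ} {n : ℕ}

lemma one_le_logloglog (hx : exp 1 ≤ loglog n) : 1 ≤ logloglog n := by
  rw [logloglog, ← log_exp 1]; exact log_le_log (exp_pos 1) hx

lemma exp_gam (hτ : 0 < τ) (hx : exp 1 ≤ loglog n) :
    exp (gam n τ) = τ * loglog n / (2 * logloglog n ^ 2) := by
  have := one_le_logloglog hx
  have := (exp_pos 1).trans_le hx
  exact exp_log (by positivity)

lemma gam_le (hτ : 0 < τ) (hx : exp 1 ≤ loglog n) : gam n τ ≤ τ * loglog n / 2 := by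
  have := one_le_logloglog hx
  have := (exp_pos 1).trans_le hx
  calc gam n τ ≤ exp (gam n τ) := by linarith [add_one_le_exp (gam n τ)]
    _ = τ * loglog n / (2 * logloglog n ^ 2) := exp_gam hτ hx
    _ ≤ τ * loglog n / 2 := div_le_div_of_nonneg_left (by positivity) two_pos (by nlinarith)

lemma wThr_le (hτ : 0 < τ) (hx : exp 1 ≤ loglog n) : wThr n τ ≤ τ * loglog n / 2 := by
  have := one_le_logloglog hx
  have := (exp_pos 1).trans_le hx
  calc wThr n τ = τ * loglog n / (2 * logloglog n) := by
        rw [wThr, exp_gam hτ hx]; field_simp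
    _ ≤ τ * loglog n / 2 := div_le_div_of_nonneg_left (by positivity) two_pos (by linarith)

lemma eventually_one_le_gam (hτ : 0 < τ) : ∀ᶠ n : ℕ in atTop, 1 ≤ gam n τ := by
  filter_upwards [isLittleO_logloglog_sq_loglog.bound (show 0 < τ / (2 * exp 1) by positivity),
    tendsto_loglog_atTop.eventually_ge_atTop (exp 1)] with n hlog hx
  have := one_le_logloglog hx
  have hx0 := (exp_pos 1).trans_le hx
  rw [norm_of_nonneg (sq_nonneg _), norm_of_nonneg hx0.le, div_mul_eq_mul_div,
    le_div_iff₀ (by positivity)] at hlog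
  rw [gam, le_log_iff_exp_le (by positivity), le_div_iff₀ (by positivity)]
  linarith

end IteratedLog

section Sectors

variable {C τ : ℝ} {n : ℕ}

lemma rho_eq (hg : 0 < gam n τ) (hn : 0 < n) :
    rho C τ n = bigR C n / 2 - log (π * gam n τ / (2 * n)) := by
  have hn' : (0 : ℝ) < n := Nat.cast_pos.2 hn
  have : π / 2 * exp (C / 2) * gam n τ = exp (log n + C / 2) * (π * gam n τ / (2 * n)) := by
    rw [exp_add, exp_log hn']; field_simp
  rw [rho, this, log_mul (exp_pos _).ne' (by positivity), log_exp, bigR]; ring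

lemma theta_mem_Icc (hg : 0 < gam n τ) (hR : 2 ≤ bigR C n) (hn : 8 * gam n τ ≤ n) :
    π * gam n τ / (2 * n) ≤ theta C τ n ∧
      theta C τ n ≤ 4 * π * (π * gam n τ / (2 * n)) := by
  have hn0 : (0 : ℝ) < n := by linarith
  set q := π * gam n τ / (2 * n)
  have hq : 0 < q := by positivity
  have hq4 : 4 * q ≤ 1 := by
    rw [mul_div_assoc', div_le_one (by positivity)]; nlinarith [pi_le_four]
  have hρ : rho C τ n = bigR C n / 2 - log q := rho_eq hg (by exact_mod_cast hn0)
  have hlogq : log q ≤ 0 := log_nonpos hq.le (by linarith)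
  have hexp : exp ((bigR C n - 2 * rho C τ n) / 2) = q := by
    rw [hρ, show (bigR C n - 2 * (bigR C n / 2 - log q)) / 2 = log q by ring, exp_log hq]
  have := arccos_hyperbolic_mem_Icc hR (ρ := rho C τ n) (by linarith) (by rwa [hexp])
  rwa [hexp] at this

lemma le_nSec (hg : 0 < gam n τ) (hR : 2 ≤ bigR C n) (hn : 8 * gam n τ ≤ n) :
    n / (8 * gam n τ) ≤ nSec C τ n := by
  obtain ⟨hθ_lb, hθ⟩ := theta_mem_Icc hg hR hn
  have hn0 : (0 : ℝ) < n := by linarith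
  have hθ0 : 0 < theta C τ n := lt_of_lt_of_le (by positivity) hθ_lb
  calc (n : ℝ) / (8 * gam n τ) ≤ n / (4 * gam n τ) - 1 := by
        rw [le_sub_iff_add_le, div_add_one (by positivity),
          div_le_div_iff₀ (by positivity) (by positivity)]
        nlinarith
    _ ≤ n / (π * gam n τ) - 1 := by gcongr; exact pi_le_four
    _ = 2 * π / (4 * π * (π * gam n τ / (2 * n))) - 1 := by field_simp; ring
    _ ≤ 2 * π / theta C τ n - 1 := by gcongr
    _ ≤ nSec C τ n := (Nat.sub_one_lt_floor _).le

lemma nSec_le (hg : 0 < gam n τ) (hR : 2 ≤ bigR C n) (hn : 8 * gam n τ ≤ n) :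
    (nSec C τ n : ℝ) ≤ 4 * n / gam n τ := by
  obtain ⟨hθ, -⟩ := theta_mem_Icc hg hR hn
  have hn0 : (0 : ℝ) < n := by linarith
  have hθ0 : 0 < theta C τ n := lt_of_lt_of_le (by positivity) hθ
  calc (nSec C τ n : ℝ) ≤ 2 * π / theta C τ n := Nat.floor_le (by positivity)
    _ ≤ 2 * π / (π * gam n τ / (2 * n)) := by gcongr
    _ = 4 * n / gam n τ := by field_simp; ring

lemma mean_points_in_window_le (hτ : 0 < τ) (hx : exp 1 ≤ loglog n) (hg : 0 < gam n τ)
    (hR : 2 ≤ bigR C n) (hn : 4 * τ * loglog n ≤ n) :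
    n * (⌊2 * wThr n τ + 1⌋₊ / nSec C τ n) ≤ 4 * τ * (τ + 1) * loglog n ^ 2 := by
  have hx1 : 1 ≤ loglog n := le_trans (by linarith [add_one_le_exp (1 : ℝ)]) hx
  have hgle := gam_le hτ hx
  have h8g : 8 * gam n τ ≤ n := by linarith
  have hn0 : (0 : ℝ) < n := by linarith
  have hsec := le_nSec (C := C) hg hR h8g
  have hsec0 : (0 : ℝ) < nSec C τ n := lt_of_lt_of_le (by positivity) hsec
  have hL : (⌊2 * wThr n τ + 1⌋₊ : ℝ) ≤ τ * loglog n + 1 := by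
    have hw0 : 0 ≤ wThr n τ := mul_nonneg (exp_pos _).le (by linarith [one_le_logloglog hx])
    linarith [wThr_le hτ hx, Nat.floor_le (a := 2 * wThr n τ + 1) (by positivity)]
  calc (n : ℝ) * (⌊2 * wThr n τ + 1⌋₊ / nSec C τ n)
      = n / nSec C τ n * ⌊2 * wThr n τ + 1⌋₊ := by ring
    _ ≤ 8 * gam n τ * (τ * loglog n + 1) := by
        gcongr
        rw [div_le_iff₀ hsec0]
        rw [div_le_iff₀ (by positivity)] at hsec
        linarith
    _ ≤ 8 * (τ * loglog n / 2) * (τ * loglog n + 1) := by gcongr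
    _ ≤ 4 * τ * (τ + 1) * loglog n ^ 2 := by nlinarith

lemma eventually_sector_bounds (hτ : 0 < τ) (C : ℝ) {K : ℝ} (hK : 0 < K) :
    ∀ᶠ n : ℕ in atTop, 0 < nSec C τ n ∧ (nSec C τ n : ℝ) ≤ n ^ 2 ∧
      exp 2 * (n * (⌊2 * wThr n τ + 1⌋₊ / nSec C τ n)) ≤ K * log n := by
  filter_upwards [tendsto_loglog_atTop.eventually_ge_atTop (exp 1), eventually_one_le_gam hτ,
    (tendsto_bigR_atTop C).eventually_ge_atTop 2, eventually_ge_atTop 4,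
    isLittleO_loglog_natCast.bound (show 0 < 1 / (4 * τ) by positivity),
    isLittleO_loglog_sq_log.bound (show 0 < K / (exp 2 * (4 * τ * (τ + 1))) by positivity)]
    with n hx hg hR hn4 hlin hsq
  have hx0 := (exp_pos 1).trans_le hx
  have hn4' : (4 : ℝ) ≤ n := by exact_mod_cast hn4
  rw [norm_of_nonneg hx0.le, norm_of_nonneg (by positivity), div_mul_eq_mul_div,
    le_div_iff₀ (by positivity)] at hlin
  rw [norm_of_nonneg (by positivity), norm_of_nonneg (log_natCast_nonneg n), div_mul_eq_mul_div,
    le_div_iff₀ (by positivity)] at hsq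
  have h8g : 8 * gam n τ ≤ n := by linarith [gam_le hτ hx]
  refine ⟨?_, ?_, ?_⟩
  · exact_mod_cast (lt_of_lt_of_le (by positivity) (le_nSec (by linarith) hR h8g) :
      (0 : ℝ) < nSec C τ n)
  · calc (nSec C τ n : ℝ) ≤ 4 * n / gam n τ := nSec_le (by linarith) hR h8g
      _ ≤ 4 * n := div_le_self (by positivity) hg
      _ ≤ n ^ 2 := by nlinarith
  · calc exp 2 * (n * (⌊2 * wThr n τ + 1⌋₊ / nSec C τ n))
        ≤ exp 2 * (4 * τ * (τ + 1) * loglog n ^ 2) := by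
          gcongr exp 2 * ?_
          exact mean_points_in_window_le hτ hx (by linarith) hR (by linarith)
      _ ≤ K * log n := by linarith

end Sectors

lemma integral_radial_density {α R : ℝ} (h : α * R ≠ 0) :
    ∫ r in (0 : ℝ)..R, α * sinh (α * r) / (cosh (α * R) - 1) = 1 := by
  have hD : cosh (α * R) - 1 ≠ 0 := by linarith [one_lt_cosh.2 h]
  have hderiv : ∀ r ∈ Set.uIcc 0 R,
      HasDerivAt (fun r => (cosh (α * r) - 1) / (cosh (α * R) - 1))
        (α * sinh (α * r) / (cosh (α * R) - 1)) r := fun r _ =>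
    ((((hasDerivAt_id r).const_mul α).cosh.sub_const 1).div_const _).congr_deriv
      (by simp only [id, mul_one]; ring)
  rw [intervalIntegral.integral_eq_sub_of_hasDerivAt hderiv
    (Continuous.intervalIntegrable (by fun_prop) _ _)]
  simp [div_self hD]

lemma lintegral_radial_density {α R : ℝ} (hα : 0 < α) (hR : 0 < R) :
    ∫⁻ r, ENNReal.ofReal ((Set.Icc 0 R).indicator
      (fun r => α * sinh (α * r) / (cosh (α * R) - 1)) r) = 1 := by
  have hD : 0 < cosh (α * R) - 1 := by linarith [one_lt_cosh.2 (mul_pos hα hR).ne']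
  rw [← ofReal_integral_eq_lintegral_ofReal, integral_indicator measurableSet_Icc,
    integral_Icc_eq_integral_Ioc, ← intervalIntegral.integral_of_le hR.le,
    integral_radial_density (mul_pos hα hR).ne', ENNReal.ofReal_one]
  · exact (Continuous.integrableOn_Icc (by fun_prop)).integrable_indicator measurableSet_Icc
  · refine Eventually.of_forall fun r => Set.indicator_nonneg (fun r hr => ?_) r
    have := sinh_nonneg_iff.2 (mul_nonneg hα.le hr.1)
    positivity

lemma hrgPDF_eq_mul (α R : ℝ) (p : ℝ × ℝ) :
    hrgPDF α R p = (Set.Ico 0 (2 * π)).indicator (fun _ => 1 / (2 * π)) p.1 *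
      (Set.Icc 0 R).indicator (fun r => α * sinh (α * r) / (cosh (α * R) - 1)) p.2 := by
  simp only [hrgPDF, Set.indicator_apply, Set.mem_Ico, Set.mem_Icc]
  split_ifs <;> simp_all

lemma hrgMeasure_fst_preimage {α R : ℝ} (hα : 0 < α) (hR : 0 < R) {A : Set ℝ}
    (hA : MeasurableSet A) :
    hrgMeasure α R (Prod.fst ⁻¹' A) =
      ENNReal.ofReal (1 / (2 * π)) * volume (A ∩ Set.Ico 0 (2 * π)) := by
  set f : ℝ → ℝ := (Set.Icc 0 R).indicator fun r => α * sinh (α * r) / (cosh (α * R) - 1)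
  have hA' : MeasurableSet (A ∩ Set.Ico 0 (2 * π)) := hA.inter measurableSet_Ico
  have hdens : (Prod.fst ⁻¹' A).indicator (fun p => ENNReal.ofReal (hrgPDF α R p)) =
      fun p => (A ∩ Set.Ico 0 (2 * π)).indicator (fun _ => ENNReal.ofReal (1 / (2 * π))) p.1 *
        ENNReal.ofReal (f p.2) := by
    classical
    ext p
    rw [Set.indicator_apply, hrgPDF_eq_mul,
      ENNReal.ofReal_mul (Set.indicator_nonneg (fun _ _ => by positivity) _)]
    by_cases hp : p.1 ∈ A <;> by_cases hp' : p.1 ∈ Set.Ico 0 (2 * π) <;>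
      simp [Set.indicator, hp, hp', f]
  have hf : Measurable fun r => ENNReal.ofReal (f r) :=
    ((Continuous.measurable (by fun_prop)).indicator measurableSet_Icc).ennreal_ofReal
  calc hrgMeasure α R (Prod.fst ⁻¹' A)
      = ∫⁻ p : ℝ × ℝ, (A ∩ Set.Ico 0 (2 * π)).indicator
          (fun _ => ENNReal.ofReal (1 / (2 * π))) p.1 * ENNReal.ofReal (f p.2)
          ∂(volume.prod volume) := by
        rw [hrgMeasure, withDensity_apply _ (measurable_fst hA),
          ← lintegral_indicator (measurable_fst hA), hdens, Measure.volume_eq_prod]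
    _ = ENNReal.ofReal (1 / (2 * π)) * volume (A ∩ Set.Ico 0 (2 * π)) * 1 := by
        rw [lintegral_prod_mul (measurable_const.indicator hA').aemeasurable hf.aemeasurable,
          lintegral_indicator_const hA', lintegral_radial_density hα hR]
    _ = _ := mul_one _

lemma measurableSet_setOf_sectorIdx (n' : ℕ) (P : ZMod n' → Prop) :
    MeasurableSet {φ : ℝ | P (sectorIdx n' φ)} :=
  ((measurable_id.mul_const _).div_const _).floor (Set.to_countable {z : ℤ | P z}).measurableSet

lemma sectorIdx_preimage_inter_subset {n' : ℕ} [NeZero n'] (s : ZMod n') :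
    {φ | sectorIdx n' φ = s} ∩ Set.Ico 0 (2 * π) ⊆
      Set.Ico (2 * π * s.val / n') (2 * π * (s.val + 1) / n') := by
  rintro φ ⟨hs, hφ0, hφ⟩
  have hn' : (0 : ℝ) < n' := Nat.cast_pos.2 (NeZero.pos n')
  have hz0 : 0 ≤ ⌊φ * n' / (2 * π)⌋ := Int.floor_nonneg.2 (by positivity)
  have hzlt : ⌊φ * n' / (2 * π)⌋ < n' := by
    rw [Int.floor_lt, div_lt_iff₀ (by positivity)]; push_cast; nlinarith
  have hval : ⌊φ * n' / (2 * π)⌋ = s.val := by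
    rw [← hs, sectorIdx, ZMod.val_intCast, Int.emod_eq_of_lt hz0 hzlt]
  obtain ⟨h1, h2⟩ := Int.floor_eq_iff.1 hval
  push_cast at h1 h2
  rw [le_div_iff₀ (by positivity)] at h1
  rw [div_lt_iff₀ (by positivity)] at h2
  constructor
  · rw [div_le_iff₀ hn']; linarith
  · rw [lt_div_iff₀ hn']; linarith

lemma volume_sectorIdx_preimage_inter_le {n' : ℕ} [NeZero n'] (s : ZMod n') :
    volume ({φ | sectorIdx n' φ = s} ∩ Set.Ico 0 (2 * π)) ≤
      ENNReal.ofReal (2 * π / n') := by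
  refine (measure_mono (sectorIdx_preimage_inter_subset s)).trans_eq ?_
  rw [Real.volume_Ico]; congr 1; ring

def sectorWindow (n' : ℕ) (j : ZMod n') (ℓ : ℕ) : Set ℝ :=
  {φ | ∃ t : ℕ, t < ℓ ∧ sectorIdx n' φ = j + (t : ZMod n')}

lemma measurableSet_sectorWindow (n' : ℕ) (j : ZMod n') (ℓ : ℕ) :
    MeasurableSet (sectorWindow n' j ℓ) :=
  measurableSet_setOf_sectorIdx n' fun s => ∃ t : ℕ, t < ℓ ∧ s = j + (t : ZMod n')

lemma hrgMeasure_sectorWindow_le {α R : ℝ} (hα : 0 < α) (hR : 0 < R) {n' : ℕ} [NeZero n']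
    (j : ZMod n') (ℓ : ℕ) :
    hrgMeasure α R (Prod.fst ⁻¹' sectorWindow n' j ℓ) ≤ ENNReal.ofReal (ℓ / n') := by
  have hcover : sectorWindow n' j ℓ ∩ Set.Ico 0 (2 * π) ⊆
      ⋃ t ∈ Finset.range ℓ, {φ | sectorIdx n' φ = j + t} ∩ Set.Ico 0 (2 * π) := by
    rintro φ ⟨⟨t, ht, hφ⟩, hφ'⟩
    exact Set.mem_biUnion (Finset.mem_range.2 ht) ⟨hφ, hφ'⟩
  have hvol : volume (sectorWindow n' j ℓ ∩ Set.Ico 0 (2 * π)) ≤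
      ℓ * ENNReal.ofReal (2 * π / n') :=
    calc _ ≤ ∑ t ∈ Finset.range ℓ,
          volume ({φ | sectorIdx n' φ = j + t} ∩ Set.Ico 0 (2 * π)) :=
          (measure_mono hcover).trans (measure_biUnion_finset_le _ _)
      _ ≤ ∑ _t ∈ Finset.range ℓ, ENNReal.ofReal (2 * π / n') :=
          Finset.sum_le_sum fun t _ => volume_sectorIdx_preimage_inter_le _
      _ = ℓ * ENNReal.ofReal (2 * π / n') := by simp
  rw [hrgMeasure_fst_preimage hα hR (measurableSet_sectorWindow n' j ℓ)]
  calc ENNReal.ofReal (1 / (2 * π)) * volume (sectorWindow n' j ℓ ∩ Set.Ico 0 (2 * π))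
      ≤ ENNReal.ofReal (1 / (2 * π)) * (ℓ * ENNReal.ofReal (2 * π / n')) := by gcongr
    _ = ENNReal.ofReal (ℓ / n') := by
        rw [← ENNReal.ofReal_natCast, ← ENNReal.ofReal_mul (by positivity),
          ← ENNReal.ofReal_mul (by positivity)]
        congr 1; field_simp

lemma ProbabilityTheory.iIndepFun.measure_le_card_mem_le {Ω ι β : Type*} [MeasurableSpace Ω]
    [MeasurableSpace β] [Fintype ι] {μ : Measure Ω} {X : ι → Ω → β} (hX : iIndepFun X μ)
    {B : Set β} (hB : MeasurableSet B) {p : ℝ≥0∞} (hp : ∀ i, μ (X i ⁻¹' B) ≤ p)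
    (k : ℕ) :
    μ {ω | k ≤ Nat.card {i | X i ω ∈ B}} ≤ (Fintype.card ι).choose k * p ^ k := by
  classical
  have hsub : {ω | k ≤ Nat.card {i | X i ω ∈ B}} ⊆
      ⋃ S ∈ Finset.powersetCard k Finset.univ, ⋂ i ∈ S, X i ⁻¹' B := by
    intro ω hω
    change k ≤ Nat.card {i | X i ω ∈ B} at hω
    rw [Nat.card_eq_fintype_card, Fintype.card_subtype] at hω
    obtain ⟨S, hS, hSk⟩ := Finset.exists_subset_card_eq hω
    exact Set.mem_biUnion (Finset.mem_powersetCard_univ.2 hSk)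
      (Set.mem_iInter₂.2 fun i hi => (Finset.mem_filter.1 (hS hi)).2)
  calc μ {ω | k ≤ Nat.card {i | X i ω ∈ B}}
      ≤ ∑ S ∈ Finset.powersetCard k Finset.univ, μ (⋂ i ∈ S, X i ⁻¹' B) :=
        (measure_mono hsub).trans (measure_biUnion_finset_le _ _)
    _ ≤ ∑ _S ∈ Finset.powersetCard k (Finset.univ : Finset ι), p ^ k := by
        refine Finset.sum_le_sum fun S hS => ?_
        rw [hX.meas_biInter fun i _ => ⟨B, hB, rfl⟩, ← (Finset.mem_powersetCard_univ.1 hS)]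
        exact Finset.prod_le_pow_card _ _ _ fun i _ => hp i
    _ = (Fintype.card ι).choose k * p ^ k := by simp

lemma ptsInWindow_mono {n n' : ℕ} (angles : Fin n → ℝ) (j : ZMod n') {ℓ L : ℕ}
    (h : ℓ ≤ L) :
    ptsInWindow n' angles j ℓ ≤ ptsInWindow n' angles j L :=
  Nat.card_mono (Set.toFinite _) fun _ ⟨t, ht, hi⟩ => ⟨t, ht.trans_le h, hi⟩

section CrowdedWindows

variable {Ω : Type*} [MeasurableSpace Ω] {μ : Measure Ω} {α C : ℝ} {n : ℕ}
  {pts : Fin n → Ω → ℝ × ℝ}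

lemma IsHRG.measure_exists_crowded_window_le (h : IsHRG α C n μ pts) (hα : 0 < α)
    (hR : 0 < bigR C n) (n' : ℕ) [NeZero n'] (L k : ℕ) :
    μ {ω | ∃ (j : ZMod n') (ℓ : ℕ), ℓ ≤ L ∧
      k ≤ ptsInWindow n' (fun i => (pts i ω).1) j ℓ} ≤
      n' * (n.choose k * ENNReal.ofReal (L / n') ^ k) := by
  set crowded : ZMod n' → Set Ω :=
    fun j => {ω | k ≤ Nat.card {i | pts i ω ∈ Prod.fst ⁻¹' sectorWindow n' j L}}
  have hsub : {ω | ∃ (j : ZMod n') (ℓ : ℕ), ℓ ≤ L ∧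
      k ≤ ptsInWindow n' (fun i => (pts i ω).1) j ℓ} ⊆ ⋃ j, crowded j :=
    fun ω ⟨j, ℓ, hℓ, hk⟩ => Set.mem_iUnion.2 ⟨j, hk.trans (ptsInWindow_mono _ j hℓ)⟩
  have hcrowded : ∀ j, μ (crowded j) ≤ n.choose k * ENNReal.ofReal (L / n') ^ k := fun j => by
    have hB : MeasurableSet (Prod.fst ⁻¹' sectorWindow n' j L : Set (ℝ × ℝ)) :=
      measurable_fst (measurableSet_sectorWindow n' j L)
    refine (h.indep.measure_le_card_mem_le hB (fun i => ?_) k).trans_eq (by rw [Fintype.card_fin])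
    rw [← Measure.map_apply (h.meas i) hB, h.law i]
    exact hrgMeasure_sectorWindow_le hα hR j L
  calc _ ≤ ∑ j, μ (crowded j) := (measure_mono hsub).trans (measure_iUnion_fintype_le _ _)
    _ ≤ ∑ _j : ZMod n', (n.choose k : ℝ≥0∞) * ENNReal.ofReal (L / n') ^ k :=
        Finset.sum_le_sum fun j _ => hcrowded j
    _ = n' * (n.choose k * ENNReal.ofReal (L / n') ^ k) := by simp

lemma IsHRG.measure_exists_crowded_window_le_exp (h : IsHRG α C n μ pts) (hα : 0 < α)
    (hR : 0 < bigR C n) {n' : ℕ} [NeZero n'] {L k : ℕ} (hmean : exp 2 * (n * (L / n')) ≤ k) :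
    μ {ω | ∃ (j : ZMod n') (ℓ : ℕ), ℓ ≤ L ∧
      k ≤ ptsInWindow n' (fun i => (pts i ω).1) j ℓ} ≤ ENNReal.ofReal (n' * exp (-k)) := by
  calc _ ≤ _ := h.measure_exists_crowded_window_le hα hR n' L k
    _ = ENNReal.ofReal (n' * (n.choose k * (L / n') ^ k)) := by
        rw [ENNReal.ofReal_mul (by positivity), ENNReal.ofReal_mul (by positivity),
          ENNReal.ofReal_pow (by positivity), ENNReal.ofReal_natCast, ENNReal.ofReal_natCast]
    _ ≤ _ := by
        gcongr
        exact Nat.choose_mul_pow_le_exp_neg (by positivity) hmean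

end CrowdedWindows

theorem short_runs_few_vertices_whp_general
    (α C τ : ℝ) (hα : α ∈ Set.Ioo (1 / 2 : ℝ) 1) (hτ : 0 < τ)
    (Ω : ℕ → Type) (mΩ : ∀ n, MeasurableSpace (Ω n))
    (μ : ∀ n, Measure (Ω n))
    (pts : ∀ n, Fin n → Ω n → ℝ × ℝ)
    (hhrg : ∀ n, IsHRG α C n (μ n) (pts n)) :
    ∀ c : ℝ, 0 < c → ∃ K : ℝ, 0 < K ∧
      (fun n : ℕ => ((μ n) {ω | ∃ (j : ZMod (nSec C τ n)) (ℓ : ℕ),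
          (ℓ : ℝ) ≤ 2 * wThr n τ + 1 ∧
          K * Real.log n <
            (ptsInWindow (nSec C τ n) (fun i => (pts n i ω).1) j ℓ : ℝ)}).toReal)
        =O[atTop] fun n : ℕ => (n : ℝ) ^ (-c) := by
  intro c hc
  refine ⟨c + 2, by positivity, IsBigO.of_bound 1 ?_⟩
  filter_upwards [eventually_sector_bounds hτ C (by positivity : (0 : ℝ) < c + 2),
    (tendsto_bigR_atTop C).eventually_gt_atTop 0, eventually_gt_atTop 0]
    with n ⟨hsec, hsec_le, hmean⟩ hR hn
  have : NeZero (nSec C τ n) := ⟨hsec.ne'⟩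
  have hsub : {ω | ∃ (j : ZMod (nSec C τ n)) (ℓ : ℕ), (ℓ : ℝ) ≤ 2 * wThr n τ + 1 ∧
      (c + 2) * log n < (ptsInWindow (nSec C τ n) (fun i => (pts n i ω).1) j ℓ : ℝ)} ⊆
      {ω | ∃ (j : ZMod (nSec C τ n)) (ℓ : ℕ), ℓ ≤ ⌊2 * wThr n τ + 1⌋₊ ∧
        ⌈(c + 2) * log n⌉₊ ≤ ptsInWindow (nSec C τ n) (fun i => (pts n i ω).1) j ℓ} :=
    fun ω ⟨j, ℓ, hℓ, hk⟩ => ⟨j, ℓ, Nat.le_floor hℓ, Nat.ceil_le.2 hk.le⟩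
  rw [norm_of_nonneg ENNReal.toReal_nonneg, norm_of_nonneg (by positivity), one_mul]
  refine ENNReal.toReal_le_of_le_ofReal (by positivity) ((measure_mono hsub).trans
    (((hhrg n).measure_exists_crowded_window_le_exp (by linarith [hα.1]) hR
      (hmean.trans (Nat.le_ceil _))).trans (ENNReal.ofReal_le_ofReal ?_)))
  calc (nSec C τ n : ℝ) * exp (-⌈(c + 2) * log n⌉₊)
      ≤ (n : ℝ) ^ 2 * exp (-⌈(c + 2) * log n⌉₊) := by gcongr
    _ ≤ (n : ℝ) ^ (-c) := sq_mul_exp_neg_le_rpow_neg (by positivity) (Nat.le_ceil _)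

/-- **Short stretches of sectors contain few vertices.**
For a family of hyperbolic random graphs on `n` vertices with parameters
`α ∈ (1/2,1)`, `C`, and fixed `τ > 0`: for every constant `c > 0` there is a constant
`K` such that with probability `1 − O(n^{−c})`, every set of at most `2w + 1`
circularly consecutive sectors (with `w = e^{γ}·log^{(3)} n`) contains at most
`K·log n` of the `n` sampled points. -/
theorem short_runs_few_vertices_whp
    (α C τ : ℝ) (hα : α ∈ Set.Ioo (1 / 2 : ℝ) 1) (hτ : 0 < τ)
    (Ω : ℕ → Type) (mΩ : ∀ n, MeasurableSpace (Ω n))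
    (μ : ∀ n, Measure (Ω n)) (hμ : ∀ n, IsProbabilityMeasure (μ n))
    (pts : ∀ n, Fin n → Ω n → ℝ × ℝ)
    (hhrg : ∀ n, IsHRG α C n (μ n) (pts n)) :
    ∀ c : ℝ, 0 < c → ∃ K : ℝ, 0 < K ∧
      (fun n : ℕ => ((μ n) {ω | ∃ (j : ZMod (nSec C τ n)) (ℓ : ℕ),
          (ℓ : ℝ) ≤ 2 * wThr n τ + 1 ∧
          K * Real.log n <
            (ptsInWindow (nSec C τ n) (fun i => (pts n i ω).1) j ℓ : ℝ)}).toReal)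
        =O[atTop] fun n : ℕ => (n : ℝ) ^ (-c) :=
  short_runs_few_vertices_whp_general α C τ hα hτ Ω mΩ μ pts hhrg
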